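/- arXiv:1502.02225 — 3 statements merged into one kernel-verified Lean document; each statement's English description precedes it below -/
import Mathlib

section
/- The function ξ(x) = 1/(x(1−x)) − R(x) is strictly increasing on (0, 1/2], with lim_{x→0⁺} ξ(x) = 1 and ξ(1/2) = 4 − 4·log 2; hence ξ maps (0,1/2] onto (1, 4 − 4·log 2]. -/
open Real Set Filter Topology

/-- The digamma function `ψ(x) = Γ'(x)/Γ(x)`. -/
noncomputable def digamma (x : ℝ) : ℝ := deriv Real.Gamma x / Real.Gamma x

/-- The Ramanujan constant function `R(x) = -2γ - ψ(x) - ψ(1-x)`. -/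
noncomputable def ramanujanR (x : ℝ) : ℝ :=
  -2 * Real.eulerMascheroniConstant - digamma x - digamma (1 - x)

/-- The Riemann zeta function as a real series `ζ(s) = Σ_{n=1}^∞ n^{-s}`. -/
noncomputable def zetaR (s : ℝ) : ℝ := ∑' n : ℕ, 1 / ((n : ℝ) + 1) ^ s

/-- The generalized elliptic integral of the first kind
`K_a(r) = (π/2) Σ_{n=0}^∞ ((a)_n (1-a)_n / (n!)^2) r^(2n)`. -/
noncomputable def Ka (a r : ℝ) : ℝ :=
  Real.pi / 2 * ∑' n : ℕ,
    (Polynomial.eval a (ascPochhammer ℝ n) * Polynomial.eval (1 - a) (ascPochhammer ℝ n)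
      / (Nat.factorial n : ℝ) ^ 2) * r ^ (2 * n)

/-- The generalized elliptic integral of the second kind
`E_a(r) = (π/2) Σ_{n=0}^∞ ((a-1)_n (1-a)_n / (n!)^2) r^(2n)`. -/
noncomputable def Ea (a r : ℝ) : ℝ :=
  Real.pi / 2 * ∑' n : ℕ,
    (Polynomial.eval (a - 1) (ascPochhammer ℝ n) * Polynomial.eval (1 - a) (ascPochhammer ℝ n)
      / (Nat.factorial n : ℝ) ^ 2) * r ^ (2 * n)

/-!
The recurrence `ψ(x + 1) = ψ(x) + 1/x` turns the function into `2γ + ψ(1 + x) + ψ(2 - x)` on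
`(0, 1)`. Since `log ∘ Γ` is convex, `ψ` is monotone, and squeezing gives the series
`ψ(x) + γ = ∑ₖ (1/(k+1) - 1/(k+x))`. Hence the function is `∑ₖ (2/(k+1) - 1/(k+1+x) - 1/(k+2-x))`,
whose terms increase on `[0, 1/2]` because `(k+1+x)(k+2-x)` does; the series also makes it
continuous up to `x = 0`, where its value is `2γ + ψ(1) + ψ(2) = 1`. At `1/2` it is
`2γ + 2ψ(3/2) = 4 - 4 log 2` by `ψ(1/2) = -γ - 2 log 2`.
-/

local notation "γ" => Real.eulerMascheroniConstant

lemma hasDerivAt_log_Gamma {x : ℝ} (hx : 0 < x) :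
    HasDerivAt (log ∘ Gamma) (digamma x) x :=
  (differentiableAt_Gamma fun m => ((neg_nonpos.mpr m.cast_nonneg).trans_lt hx).ne').hasDerivAt.log
    (Gamma_pos_of_pos hx).ne'

lemma digamma_add_one {x : ℝ} (hx : 0 < x) : digamma (x + 1) = digamma x + 1 / x := by
  have hshift : HasDerivAt (fun y => log (Gamma (y + 1))) (digamma (x + 1)) x := by
    simpa [Function.comp_def] using
      (hasDerivAt_log_Gamma (by positivity : 0 < x + 1)).comp x ((hasDerivAt_id x).add_const 1)
  have hrec : (fun y => log (Gamma (y + 1))) =ᶠ[𝓝 x] fun y => log (Gamma y) + log y := by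
    filter_upwards [eventually_gt_nhds hx] with y hy
    rw [Gamma_add_one hy.ne', log_mul hy.ne' (Gamma_pos_of_pos hy).ne', add_comm]
  exact (hshift.congr_of_eventuallyEq hrec.symm).unique
    (by simpa [one_div, Pi.add_def] using (hasDerivAt_log_Gamma hx).add (hasDerivAt_log hx.ne'))

lemma monotoneOn_digamma : MonotoneOn digamma (Ioi 0) := by
  have h := convexOn_log_Gamma.monotoneOn_deriv fun x hx =>
    (hasDerivAt_log_Gamma hx).differentiableAt
  intro a ha b hb hab
  simpa only [(hasDerivAt_log_Gamma ha).deriv, (hasDerivAt_log_Gamma hb).deriv] using h ha hb hab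

lemma digamma_nat_add_one (n : ℕ) : digamma (n + 1) = -γ + harmonic n := by
  rw [digamma, deriv_Gamma_nat, Gamma_nat_eq_factorial, mul_div_cancel_left₀ _ (by positivity)]

lemma digamma_one : digamma 1 = -γ := by
  simpa using digamma_nat_add_one 0

lemma digamma_add_nat {x : ℝ} (hx : 0 < x) (n : ℕ) :
    digamma (x + n) = digamma x + ∑ k ∈ Finset.range n, 1 / (x + k) := by
  induction n with
  | zero => simp
  | succ n ih =>
    rw [Nat.cast_succ, ← add_assoc, digamma_add_one (by positivity), ih, Finset.sum_range_succ,
      add_assoc]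

-- The partial sums are `H_n + ψ(x) - ψ(x + n)`, and `ψ(n + 1) ≤ ψ(x + n) ≤ ψ(n + 2)`.
lemma hasSum_digamma_add_eulerMascheroniConstant {x : ℝ} (hx1 : 1 ≤ x) (hx2 : x ≤ 2) :
    HasSum (fun k : ℕ => 1 / ((k : ℝ) + 1) - 1 / (k + x)) (digamma x + γ) := by
  have hx : 0 < x := by linarith
  have hterm (k : ℕ) : 0 ≤ 1 / ((k : ℝ) + 1) - 1 / (k + x) :=
    sub_nonneg.mpr (one_div_le_one_div_of_le (by positivity) (by linarith))
  rw [hasSum_iff_tendsto_nat_of_nonneg hterm]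
  have hpartial (n : ℕ) : ∑ k ∈ Finset.range n, (1 / ((k : ℝ) + 1) - 1 / (k + x))
      = harmonic n + digamma x - digamma (x + n) := by
    rw [Finset.sum_sub_distrib, digamma_add_nat hx, harmonic]
    push_cast
    simp only [one_div, add_comm x]
    ring
  have hlow (n : ℕ) : digamma (n + 1) ≤ digamma (x + n) :=
    monotoneOn_digamma (mem_Ioi.mpr (by positivity)) (mem_Ioi.mpr (by positivity)) (by linarith)
  have hup (n : ℕ) : digamma (x + n) ≤ digamma (n + 1) + 1 / (n + 1) := by
    rw [← digamma_add_one (by positivity)]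
    exact monotoneOn_digamma (mem_Ioi.mpr (by positivity)) (mem_Ioi.mpr (by positivity))
      (by linarith)
  refine tendsto_of_tendsto_of_tendsto_of_le_of_le (g := fun n : ℕ => digamma x + γ - 1 / (n + 1))
    ?_ tendsto_const_nhds (fun n => ?_) (fun n => ?_)
  · simpa using
      (tendsto_const_nhds (x := digamma x + γ)).sub tendsto_one_div_add_atTop_nhds_zero_nat
  · simp only [hpartial]
    linarith [hup n, digamma_nat_add_one n]
  · simp only [hpartial]
    linarith [hlow n, digamma_nat_add_one n]

lemma continuousOn_digamma : ContinuousOn digamma (Icc 1 2) := by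
  have hbound (k : ℕ) (x : ℝ) (hx : x ∈ Icc (1 : ℝ) 2) :
      ‖1 / ((k : ℝ) + 1) - 1 / (k + x)‖ ≤ 1 / ((k : ℝ) + 1) ^ 2 := by
    obtain ⟨hx1, hx2⟩ := hx
    rw [norm_of_nonneg (sub_nonneg.mpr (one_div_le_one_div_of_le (by positivity) (by linarith))),
      div_sub_div _ _ (by positivity) (by positivity),
      div_le_div_iff₀ (by positivity) (by positivity)]
    nlinarith
  have hsummable : Summable fun k : ℕ => 1 / ((k : ℝ) + 1) ^ 2 := by
    exact_mod_cast (summable_nat_add_iff 1).mpr (Real.summable_one_div_nat_pow.mpr one_lt_two)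
  have hterm (k : ℕ) : ContinuousOn (fun x : ℝ => 1 / ((k : ℝ) + 1) - 1 / (k + x)) (Icc 1 2) :=
    continuousOn_const.sub (continuousOn_const.div (by fun_prop)
      fun x hx => (by linarith [hx.1, k.cast_nonneg (α := ℝ)] : (0 : ℝ) < k + x).ne')
  have hcont : ContinuousOn (fun x => ∑' k : ℕ, (1 / ((k : ℝ) + 1) - 1 / (k + x)) - γ) (Icc 1 2) :=
    (continuousOn_tsum hterm hsummable hbound).sub continuousOn_const
  refine hcont.congr fun x hx => ?_
  rw [eq_sub_iff_add_eq, (hasSum_digamma_add_eulerMascheroniConstant hx.1 hx.2).tsum_eq]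

lemma strictAntiOn_one_div_add_add_one_div_add_one_sub {c : ℝ} (hc : 0 < c) :
    StrictAntiOn (fun t => 1 / (c + t) + 1 / (c + 1 - t)) (Icc 0 (1 / 2)) := by
  have hsum {t : ℝ} (ht : t ∈ Icc (0 : ℝ) (1 / 2)) :
      1 / (c + t) + 1 / (c + 1 - t) = (2 * c + 1) / ((c + t) * (c + 1 - t)) := by
    have := ht.1; have := ht.2
    rw [div_add_div _ _ (by positivity) (by linarith)]
    ring
  intro x hx y hy hxy
  simp only [hsum hx, hsum hy]
  have := hx.1; have := hx.2; have := hy.1; have := hy.2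
  exact div_lt_div_of_pos_left (by positivity) (by nlinarith) (by nlinarith)

lemma strictMonoOn_digamma_one_add_add_digamma_two_sub :
    StrictMonoOn (fun x => digamma (1 + x) + digamma (2 - x)) (Icc 0 (1 / 2)) := by
  have hsum {t : ℝ} (ht : t ∈ Icc (0 : ℝ) (1 / 2)) :
      HasSum (fun k : ℕ => 2 / ((k : ℝ) + 1) - (1 / ((k + 1) + t) + 1 / ((k + 1) + 1 - t)))
        (digamma (1 + t) + digamma (2 - t) + 2 * γ) := by
    have := ht.1; have := ht.2
    convert
      (hasSum_digamma_add_eulerMascheroniConstant (x := 1 + t) (by linarith) (by linarith)).add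
        (hasSum_digamma_add_eulerMascheroniConstant (x := 2 - t) (by linarith) (by linarith))
      using 1
    · ext k; ring_nf
    · ring
  intro x hx y hy hxy
  have hterm (k : ℕ) := strictAntiOn_one_div_add_add_one_div_add_one_sub
    (by positivity : (0 : ℝ) < k + 1) hx hy hxy
  have hlt := hasSum_lt (i := 0) (fun k => (sub_lt_sub_left (hterm k) _).le)
    (sub_lt_sub_left (hterm 0) _) (hsum hx) (hsum hy)
  simp only at hlt ⊢
  linarith

lemma one_div_mul_one_sub_sub_ramanujanR {x : ℝ} (hx0 : 0 < x) (hx1 : x < 1) :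
    1 / (x * (1 - x)) - ramanujanR x = 2 * γ + (digamma (1 + x) + digamma (2 - x)) := by
  have hx1' : 0 < 1 - x := sub_pos.mpr hx1
  rw [ramanujanR, add_comm 1 x, digamma_add_one hx0, show 2 - x = (1 - x) + 1 by ring,
    digamma_add_one hx1']
  field_simp [hx1'.ne']
  ring

lemma digamma_one_half : digamma (1 / 2) = -γ - 2 * log 2 := by
  rw [digamma, hasDerivAt_Gamma_one_half.deriv, Gamma_one_half_eq]
  field_simp [(sqrt_pos.mpr pi_pos).ne']
  ring

lemma StrictMonoOn.image_Ioc_eq {α δ : Type*} [ConditionallyCompleteLinearOrder α]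
    [TopologicalSpace α] [OrderTopology α] [DenselyOrdered α] [LinearOrder δ] [TopologicalSpace δ]
    [OrderClosedTopology δ] {f : α → δ} {a b : α} (hf : StrictMonoOn f (Icc a b))
    (hcont : ContinuousOn f (Icc a b)) (hab : a ≤ b) :
    f '' Ioc a b = Ioc (f a) (f b) := by
  refine Subset.antisymm ?_ (intermediate_value_Ioc hab hcont)
  rintro _ ⟨x, hx, rfl⟩
  exact ⟨hf (left_mem_Icc.mpr hab) (Ioc_subset_Icc_self hx) hx.1,
    hf.monotoneOn (Ioc_subset_Icc_self hx) (right_mem_Icc.mpr hab) hx.2⟩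

theorem stmt4 :
    StrictMonoOn (fun x : ℝ => 1 / (x * (1 - x)) - ramanujanR x) (Set.Ioc 0 (1/2)) ∧
    Filter.Tendsto (fun x : ℝ => 1 / (x * (1 - x)) - ramanujanR x)
      (nhdsWithin 0 (Set.Ioi 0)) (nhds 1) ∧
    1 / ((1/2 : ℝ) * (1 - 1/2)) - ramanujanR (1/2) = 4 - 4 * Real.log 2 ∧
    (fun x : ℝ => 1 / (x * (1 - x)) - ramanujanR x) '' Set.Ioc 0 (1/2) =
      Set.Ioc 1 (4 - 4 * Real.log 2) := by
  set Φ : ℝ → ℝ := fun x => 2 * γ + (digamma (1 + x) + digamma (2 - x)) with hΦ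
  have hξ : EqOn (fun x : ℝ => 1 / (x * (1 - x)) - ramanujanR x) Φ (Ioc 0 (1 / 2)) :=
    fun x hx => one_div_mul_one_sub_sub_ramanujanR hx.1 (by linarith [hx.2])
  have hmono : StrictMonoOn Φ (Icc 0 (1 / 2)) := fun x hx y hy hxy =>
    add_lt_add_right (strictMonoOn_digamma_one_add_add_digamma_two_sub hx hy hxy) _
  have hcont : ContinuousOn Φ (Icc 0 (1 / 2)) := by
    refine continuousOn_const.add ((continuousOn_digamma.comp (by fun_prop) ?_).add
      (continuousOn_digamma.comp (by fun_prop) ?_)) <;>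
    exact fun x hx => ⟨by linarith [hx.1, hx.2], by linarith [hx.1, hx.2]⟩
  have hΦ0 : Φ 0 = 1 := by
    have hψ2 : digamma 2 = digamma 1 + 1 := by
      simpa [one_add_one_eq_two] using digamma_add_one one_pos
    simp only [hΦ, add_zero, sub_zero, hψ2, digamma_one]
    ring
  have hΦhalf : Φ (1 / 2) = 4 - 4 * log 2 := by
    simp only [hΦ]
    rw [show (1 : ℝ) + 1 / 2 = 1 / 2 + 1 by norm_num, show (2 : ℝ) - 1 / 2 = 1 / 2 + 1 by norm_num,
      digamma_add_one one_half_pos, digamma_one_half]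
    ring
  refine ⟨(hmono.mono Ioc_subset_Icc_self).congr hξ.symm, ?_, ?_, ?_⟩
  · have hlim := ((hcont 0 (left_mem_Icc.mpr (by norm_num))).mono Ioc_subset_Icc_self).tendsto
      |>.congr' hξ.eventuallyEq_nhdsWithin.symm
    rwa [hΦ0, nhdsWithin_Ioc_eq_nhdsGT (by norm_num)] at hlim
  · exact (hξ (right_mem_Ioc.mpr (by norm_num))).trans hΦhalf
  · rw [hξ.image_eq, hmono.image_Ioc_eq hcont (by norm_num), hΦ0, hΦhalf]
end

section
/- Fix a ∈ (0, 1/2]. For λ > 0 define, for r ∈ (0,1), G_λ(r) = 1/2 − log(e^{R(a)/2}/r') + [r²·sin(πa) − 2(1−a)·(E_a(r) − r'²·K_a(r))] / (2λ·r²·r'²·sin(πa)), where r' = √(1−r²). If λ ≥ a(1−a), then G_λ is strictly decreasing on (0, 1). -/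
open Real Set Filter Topology

open scoped Nat

/-!
Put `t = r²`, `d n = kaCoeff a n` and `L = sin (π a) / π`. Euler's limit formula for `Γ` and the
reflection formula give `n d n → L`, and `n d n` increases by `a (1 - a) d n / (n + 1)` at each
step. The coefficient recursions yield `E_a - (1 - t) K_a = (π / 2) a t Φ` with
`Φ = Σ d n tⁿ / (n + 1)`, and `(1 - t) Σ (L - (k + 1) d (k + 1)) tᵏ = L - a (1 - a) Φ`; so the
fraction in `G_λ` is `Σ (L - (k + 1) d (k + 1)) tᵏ / (2 λ L)`. Adding the series of
`log (1 - t) / 2`, `G_λ` is a constant plus `Σ c k t^(k + 1)` with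
`c k = (L - (k + 2) d (k + 2)) / (2 λ L) - 1 / (2 (k + 1))`, and the telescoping bound
`L - n d n ≤ a (1 - a) L / n` makes every `c k` negative as soon as `λ ≥ a (1 - a)`.
-/

noncomputable def kaCoeff (a : ℝ) (n : ℕ) : ℝ :=
  (ascPochhammer ℝ n).eval a * (ascPochhammer ℝ n).eval (1 - a) / (n ! : ℝ) ^ 2

noncomputable def eaCoeff (a : ℝ) (n : ℕ) : ℝ :=
  (ascPochhammer ℝ n).eval (a - 1) * (ascPochhammer ℝ n).eval (1 - a) / (n ! : ℝ) ^ 2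

lemma ascPochhammer_eval_eq_prod_range {S : Type*} [CommSemiring S] (s : S) (n : ℕ) :
    (ascPochhammer S n).eval s = ∏ j ∈ Finset.range n, (s + j) := by
  induction n with
  | zero => simp
  | succ n ih => rw [ascPochhammer_succ_eval, ih, Finset.prod_range_succ]

lemma ascPochhammer_succ_eval_left {S : Type*} [CommSemiring S] (s : S) (n : ℕ) :
    (ascPochhammer S (n + 1)).eval s = s * (ascPochhammer S n).eval (s + 1) := by
  rw [ascPochhammer_eval_eq_prod_range, ascPochhammer_eval_eq_prod_range, Finset.prod_range_succ']
  simp only [Nat.cast_add, Nat.cast_one, Nat.cast_zero, add_zero, add_assoc, add_comm (1 : S)]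
  ring

section Coefficients

variable {a : ℝ}

lemma kaCoeff_zero (a : ℝ) : kaCoeff a 0 = 1 := by simp [kaCoeff]

lemma kaCoeff_one (a : ℝ) : kaCoeff a 1 = a * (1 - a) := by simp [kaCoeff]

lemma eaCoeff_zero (a : ℝ) : eaCoeff a 0 = 1 := by simp [eaCoeff]

lemma kaCoeff_succ (a : ℝ) (n : ℕ) :
    kaCoeff a (n + 1) = kaCoeff a n * ((a + n) * (1 - a + n) / ((n : ℝ) + 1) ^ 2) := by
  simp only [kaCoeff, ascPochhammer_succ_eval, Nat.factorial_succ]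
  push_cast
  field_simp

lemma eaCoeff_succ (a : ℝ) (n : ℕ) :
    eaCoeff a (n + 1) = kaCoeff a (n + 1) - kaCoeff a n + a / ((n : ℝ) + 1) * kaCoeff a n := by
  simp only [eaCoeff, kaCoeff, ascPochhammer_succ_eval_left (a - 1), sub_add_cancel,
    ascPochhammer_succ_eval _ (1 - a), ascPochhammer_succ_eval _ a, Nat.factorial_succ]
  push_cast
  field_simp
  ring

lemma succ_mul_kaCoeff_succ (a : ℝ) (n : ℕ) :
    ((n : ℝ) + 1) * kaCoeff a (n + 1) =
      n * kaCoeff a n + a * (1 - a) * kaCoeff a n / ((n : ℝ) + 1) := by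
  rw [kaCoeff_succ]
  field_simp
  ring

lemma kaCoeff_pos (ha0 : 0 < a) (ha1 : a < 1) (n : ℕ) : 0 < kaCoeff a n :=
  div_pos (mul_pos (ascPochhammer_pos n a ha0) (ascPochhammer_pos n (1 - a) (by linarith)))
    (by positivity)

lemma kaCoeff_le_one (ha0 : 0 < a) (ha1 : a < 1) (n : ℕ) : kaCoeff a n ≤ 1 := by
  induction n with
  | zero => rw [kaCoeff_zero]
  | succ n ih =>
    have hratio : (a + n) * (1 - a + n) / ((n : ℝ) + 1) ^ 2 ≤ 1 := by
      rw [div_le_one (by positivity)]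
      nlinarith [sq_nonneg (a - 1 / 2), (n.cast_nonneg : (0 : ℝ) ≤ n)]
    rw [kaCoeff_succ]
    exact mul_le_one₀ ih (by positivity) hratio

end Coefficients

section Limit

variable {a : ℝ}

lemma GammaSeq_mul_GammaSeq_one_sub (a : ℝ) {n : ℕ} (hn : n ≠ 0) :
    GammaSeq a n * GammaSeq (1 - a) n =
      n * (n ! : ℝ) ^ 2 /
        ((ascPochhammer ℝ (n + 1)).eval a * (ascPochhammer ℝ (n + 1)).eval (1 - a)) := by
  have hpow : (n : ℝ) ^ a * (n : ℝ) ^ (1 - a) = n := by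
    rw [← rpow_add (by positivity), add_sub_cancel, rpow_one]
  rw [GammaSeq, GammaSeq, ascPochhammer_eval_eq_prod_range, ascPochhammer_eval_eq_prod_range]
  calc _ = (n : ℝ) ^ a * (n : ℝ) ^ (1 - a) * (n ! : ℝ) ^ 2 /
        ((∏ j ∈ Finset.range (n + 1), (a + j)) * ∏ j ∈ Finset.range (n + 1), (1 - a + j)) := by
        ring
    _ = _ := by rw [hpow]

lemma succ_mul_kaCoeff_succ_eq_GammaSeq (a : ℝ) {n : ℕ} (hn : n ≠ 0) :
    ((n : ℝ) + 1) * kaCoeff a (n + 1) =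
      n / ((n : ℝ) + 1) * (GammaSeq a n * GammaSeq (1 - a) n)⁻¹ := by
  rw [GammaSeq_mul_GammaSeq_one_sub a hn, kaCoeff, Nat.factorial_succ]
  push_cast
  field_simp

lemma sin_pi_mul_pos (ha0 : 0 < a) (ha1 : a < 1) : 0 < sin (π * a) :=
  sin_pos_of_pos_of_lt_pi (by positivity) (by nlinarith [pi_pos])

lemma tendsto_mul_kaCoeff (hsin : sin (π * a) ≠ 0) :
    Tendsto (fun n : ℕ => n * kaCoeff a n) atTop (𝓝 (sin (π * a) / π)) := by
  have hGamma : Tendsto (fun n => (GammaSeq a n * GammaSeq (1 - a) n)⁻¹) atTop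
      (𝓝 (sin (π * a) / π)) := by
    rw [← inv_div, ← Gamma_mul_Gamma_one_sub]
    refine ((GammaSeq_tendsto_Gamma a).mul (GammaSeq_tendsto_Gamma (1 - a))).inv₀ ?_
    rw [Gamma_mul_Gamma_one_sub]
    exact div_ne_zero pi_ne_zero hsin
  have hfrac : Tendsto (fun n : ℕ => (n : ℝ) / ((n : ℝ) + 1)) atTop (𝓝 1) :=
    tendsto_natCast_div_add_atTop 1
  refine (tendsto_add_atTop_iff_nat 1).mp ?_
  rw [← one_mul (sin (π * a) / π)]
  refine (hfrac.mul hGamma).congr' ?_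
  filter_upwards [eventually_ne_atTop 0] with n hn
  push_cast
  exact (succ_mul_kaCoeff_succ_eq_GammaSeq a hn).symm

end Limit

noncomputable def kaTail (a : ℝ) (n : ℕ) : ℝ := sin (π * a) / π - n * kaCoeff a n

section Tail

variable {a : ℝ}

lemma kaTail_sub_kaTail_succ (a : ℝ) (n : ℕ) :
    kaTail a n - kaTail a (n + 1) = a * (1 - a) * kaCoeff a n / ((n : ℝ) + 1) := by
  rw [kaTail, kaTail, Nat.cast_succ, succ_mul_kaCoeff_succ]
  ring

lemma tendsto_kaTail (hsin : sin (π * a) ≠ 0) : Tendsto (kaTail a) atTop (𝓝 0) := by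
  have := (tendsto_mul_kaCoeff hsin).const_sub (sin (π * a) / π)
  rwa [sub_self] at this

lemma antitone_kaTail (ha0 : 0 < a) (ha1 : a < 1) : Antitone (kaTail a) := by
  refine antitone_nat_of_succ_le fun n => sub_nonneg.mp ?_
  rw [kaTail_sub_kaTail_succ]
  have := kaCoeff_pos ha0 ha1 n
  have : 0 < 1 - a := by linarith
  positivity

lemma kaTail_nonneg (ha0 : 0 < a) (ha1 : a < 1) (n : ℕ) : 0 ≤ kaTail a n :=
  (antitone_kaTail ha0 ha1).le_of_tendsto (tendsto_kaTail (sin_pi_mul_pos ha0 ha1).ne') n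

lemma kaTail_le (ha0 : 0 < a) (ha1 : a < 1) (n : ℕ) : kaTail a n ≤ sin (π * a) / π :=
  sub_le_self _ (mul_nonneg n.cast_nonneg (kaCoeff_pos ha0 ha1 n).le)

/-- Telescoping: each step `kaTail a (m + 1) - kaTail a (m + 2)` is at most
`a (1 - a) L (1 / (m + 1) - 1 / (m + 2))`. -/
lemma kaTail_succ_le (ha0 : 0 < a) (ha1 : a < 1) (n : ℕ) :
    kaTail a (n + 1) ≤ a * (1 - a) * (sin (π * a) / π) / ((n : ℝ) + 1) := by
  set L := sin (π * a) / π
  set q := a * (1 - a)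
  have hq : 0 < q := mul_pos ha0 (by linarith)
  have hstep (m : ℕ) : kaTail a (m + 1) - kaTail a (m + 1 + 1) ≤
      q * L / ((m : ℝ) + 1) - q * L / ((m : ℝ) + 1 + 1) := by
    have hmul : ((m : ℝ) + 1) * kaCoeff a (m + 1) ≤ L := by
      have := kaTail_nonneg ha0 ha1 (m + 1)
      rw [kaTail, Nat.cast_succ] at this
      linarith
    rw [kaTail_sub_kaTail_succ, Nat.cast_succ]
    calc q * kaCoeff a (m + 1) / ((m : ℝ) + 1 + 1)
        = q * (((m : ℝ) + 1) * kaCoeff a (m + 1)) / (((m : ℝ) + 1) * ((m : ℝ) + 1 + 1)) := by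
          field_simp
      _ ≤ q * L / (((m : ℝ) + 1) * ((m : ℝ) + 1 + 1)) := by gcongr
      _ = q * L / ((m : ℝ) + 1) - q * L / ((m : ℝ) + 1 + 1) := by
          field_simp
          ring
  let v : ℕ → ℝ := fun m => q * L / ((m : ℝ) + 1) - kaTail a (m + 1)
  have hv_anti : Antitone v := antitone_nat_of_succ_le fun m => by
    have := hstep m
    simp only [v, Nat.cast_succ]
    linarith
  have hv_lim : Tendsto v atTop (𝓝 (q * L * 0 - 0)) :=
    ((tendsto_one_div_add_atTop_nhds_zero_nat.const_mul (q * L)).congr fun m => by ring).sub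
      ((tendsto_add_atTop_iff_nat 1).mpr (tendsto_kaTail (sin_pi_mul_pos ha0 ha1).ne'))
  have := hv_anti.le_of_tendsto (by simpa using hv_lim) n
  simp only [v] at this
  linarith

end Tail

lemma HasSum.sub_mul_pow_succ {R : Type*} [CommRing R] [TopologicalSpace R] [IsTopologicalRing R]
    {b : ℕ → R} {t S : R} (h : HasSum (fun k => b k * t ^ k) S) :
    HasSum (fun k => (b (k + 1) - b k) * t ^ (k + 1)) ((1 - t) * S - b 0) := by
  have hshift := (hasSum_nat_add_iff' 1).mpr h
  have hterm : (fun k => (b (k + 1) - b k) * t ^ (k + 1)) =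
      fun k => b (k + 1) * t ^ (k + 1) - t * (b k * t ^ k) := by
    ext k
    ring
  rw [hterm, show (1 - t) * S - b 0 = S - ∑ i ∈ Finset.range 1, b i * t ^ i - t * S by
    simp; ring]
  exact hshift.sub (h.mul_left t)

section Series

variable {a t : ℝ}

lemma summable_kaCoeff_mul_pow (ha0 : 0 < a) (ha1 : a < 1) (ht0 : 0 ≤ t) (ht1 : t < 1) :
    Summable (fun n : ℕ => kaCoeff a n * t ^ n) :=
  (summable_geometric_of_lt_one ht0 ht1).of_nonneg_of_le
    (fun n => mul_nonneg (kaCoeff_pos ha0 ha1 n).le (pow_nonneg ht0 n))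
    (fun n => mul_le_of_le_one_left (pow_nonneg ht0 n) (kaCoeff_le_one ha0 ha1 n))

lemma summable_kaCoeff_div_mul_pow (ha0 : 0 < a) (ha1 : a < 1) (ht0 : 0 ≤ t) (ht1 : t < 1) :
    Summable (fun n : ℕ => kaCoeff a n / ((n : ℝ) + 1) * t ^ n) :=
  (summable_kaCoeff_mul_pow ha0 ha1 ht0 ht1).of_nonneg_of_le
    (fun n => by have := kaCoeff_pos ha0 ha1 n; positivity)
    (fun n => mul_le_mul_of_nonneg_right
      (div_le_self (kaCoeff_pos ha0 ha1 n).le (by simp)) (pow_nonneg ht0 n))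

lemma summable_kaTail_mul_pow (ha0 : 0 < a) (ha1 : a < 1) (ht0 : 0 ≤ t) (ht1 : t < 1) :
    Summable (fun k : ℕ => kaTail a (k + 1) * t ^ k) :=
  ((summable_geometric_of_lt_one ht0 ht1).mul_left (sin (π * a) / π)).of_nonneg_of_le
    (fun k => mul_nonneg (kaTail_nonneg ha0 ha1 _) (pow_nonneg ht0 k))
    (fun k => mul_le_mul_of_nonneg_right (kaTail_le ha0 ha1 _) (pow_nonneg ht0 k))

lemma HasSum.eaCoeff_mul_pow {K Φ : ℝ} (hK : HasSum (fun n : ℕ => kaCoeff a n * t ^ n) K)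
    (hΦ : HasSum (fun n : ℕ => kaCoeff a n / ((n : ℝ) + 1) * t ^ n) Φ) :
    HasSum (fun n : ℕ => eaCoeff a n * t ^ n) ((1 - t) * K + a * t * Φ) := by
  refine (hasSum_nat_add_iff' 1).mp ?_
  have hterm : (fun n : ℕ => eaCoeff a (n + 1) * t ^ (n + 1)) = fun n =>
      (kaCoeff a (n + 1) - kaCoeff a n) * t ^ (n + 1) +
        a * t * (kaCoeff a n / ((n : ℝ) + 1) * t ^ n) := by
    ext n
    rw [eaCoeff_succ]
    ring
  rw [hterm, show (1 - t) * K + a * t * Φ - ∑ i ∈ Finset.range 1, eaCoeff a i * t ^ i =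
      (1 - t) * K - kaCoeff a 0 + a * t * Φ by simp [eaCoeff_zero, kaCoeff_zero]; ring]
  exact hK.sub_mul_pow_succ.add (hΦ.mul_left (a * t))

lemma one_sub_mul_eq_of_hasSum_kaTail {Γ Φ : ℝ}
    (hΓ : HasSum (fun k : ℕ => kaTail a (k + 1) * t ^ k) Γ)
    (hΦ : HasSum (fun n : ℕ => kaCoeff a n / ((n : ℝ) + 1) * t ^ n) Φ) :
    (1 - t) * Γ = sin (π * a) / π - a * (1 - a) * Φ := by
  have hΦ' := ((hasSum_nat_add_iff' 1).mpr hΦ).mul_left (-(a * (1 - a)))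
  have hterm : (fun k : ℕ => (kaTail a (k + 1 + 1) - kaTail a (k + 1)) * t ^ (k + 1)) =
      fun k =>
        -(a * (1 - a)) * (kaCoeff a (k + 1) / (((k + 1 : ℕ) : ℝ) + 1) * t ^ (k + 1)) := by
    ext k
    rw [← neg_sub, kaTail_sub_kaTail_succ]
    ring
  have h := (hterm ▸ hΓ.sub_mul_pow_succ).unique hΦ'
  simp only [kaTail, Finset.range_one, Finset.sum_singleton, kaCoeff_zero] at h
  rw [Nat.cast_one, kaCoeff_one] at h
  linear_combination h

end Series

noncomputable def ellipticG (a lam r : ℝ) : ℝ :=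
  1/2 - Real.log (Real.exp (ramanujanR a / 2) / Real.sqrt (1 - r^2))
    + (r^2 * Real.sin (Real.pi * a)
        - 2 * (1 - a) * (Ea a r - (Real.sqrt (1 - r^2))^2 * Ka a r))
      / (2 * lam * r^2 * (Real.sqrt (1 - r^2))^2 * Real.sin (Real.pi * a))

lemma Ka_eq_tsum (a r : ℝ) : Ka a r = π / 2 * ∑' n : ℕ, kaCoeff a n * (r ^ 2) ^ n := by
  simp_rw [← pow_mul]
  rfl

lemma Ea_eq_tsum (a r : ℝ) : Ea a r = π / 2 * ∑' n : ℕ, eaCoeff a n * (r ^ 2) ^ n := by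
  simp_rw [← pow_mul]
  rfl

noncomputable def ellipticGCoeff (a lam : ℝ) (k : ℕ) : ℝ :=
  kaTail a (k + 2) / (2 * lam * (sin (π * a) / π)) - 1 / (2 * ((k : ℝ) + 1))

section Expansion

variable {a lam r : ℝ}

lemma ellipticG_eq_of_hasSum (ha0 : 0 < a) (ha1 : a < 1) (hlam : lam ≠ 0) (hr : r ∈ Ioo 0 1)
    {Γ : ℝ} (hΓ : HasSum (fun k : ℕ => kaTail a (k + 1) * (r ^ 2) ^ k) Γ) :
    ellipticG a lam r =
      1 / 2 - ramanujanR a / 2 + log (1 - r ^ 2) / 2 + Γ / (2 * lam * (sin (π * a) / π)) := by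
  obtain ⟨hr0, hr1⟩ := hr
  set t := r ^ 2 with ht
  have ht0 : 0 < t := by positivity
  have ht1 : 0 < 1 - t := by nlinarith
  have hsin := sin_pi_mul_pos ha0 ha1
  obtain ⟨K, hK⟩ := summable_kaCoeff_mul_pow ha0 ha1 ht0.le (by linarith)
  obtain ⟨Φ, hΦ⟩ := summable_kaCoeff_div_mul_pow ha0 ha1 ht0.le (by linarith)
  have hKa : Ka a r = π / 2 * K := by rw [Ka_eq_tsum, hK.tsum_eq]
  have hEa : Ea a r = π / 2 * ((1 - t) * K + a * t * Φ) := by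
    rw [Ea_eq_tsum, (hK.eaCoeff_mul_pow hΦ).tsum_eq]
  have hΓΦ := one_sub_mul_eq_of_hasSum_kaTail hΓ hΦ
  have hlog : log (exp (ramanujanR a / 2) / √(1 - t)) = ramanujanR a / 2 - log (1 - t) / 2 := by
    rw [log_div (exp_ne_zero _) (sqrt_ne_zero'.mpr ht1), log_exp, log_sqrt ht1.le]
  have hfrac : (t * sin (π * a) - 2 * (1 - a) * (Ea a r - √(1 - t) ^ 2 * Ka a r)) /
      (2 * lam * t * √(1 - t) ^ 2 * sin (π * a)) = Γ / (2 * lam * (sin (π * a) / π)) := by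
    rw [sq_sqrt ht1.le, hEa, hKa]
    have hnum : t * sin (π * a) - 2 * (1 - a) * (π / 2 * ((1 - t) * K + a * t * Φ) -
        (1 - t) * (π / 2 * K)) = π * t * ((1 - t) * Γ) := by
      rw [hΓΦ]
      field_simp
      ring
    rw [hnum]
    field_simp
  rw [ellipticG, hlog, hfrac]
  ring

lemma hasSum_ellipticG (ha0 : 0 < a) (ha1 : a < 1) (hlam : lam ≠ 0) (hr : r ∈ Ioo 0 1) :
    HasSum (fun k : ℕ => ellipticGCoeff a lam k * (r ^ 2) ^ (k + 1))
      (ellipticG a lam r -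
        (1 / 2 - ramanujanR a / 2 + kaTail a 1 / (2 * lam * (sin (π * a) / π)))) := by
  have ht0 : 0 < r ^ 2 := pow_pos hr.1 2
  have ht1 : r ^ 2 < 1 := by nlinarith [hr.1, hr.2]
  obtain ⟨Γ, hΓ⟩ := summable_kaTail_mul_pow ha0 ha1 ht0.le ht1
  have hΓ' := ((hasSum_nat_add_iff' 1).mpr hΓ).mul_left (1 / (2 * lam * (sin (π * a) / π)))
  simp only [Finset.range_one, Finset.sum_singleton, pow_zero, mul_one, zero_add] at hΓ'
  have hlog := (hasSum_pow_div_log_of_abs_lt_one (by rwa [abs_of_pos ht0])).mul_left (-1 / 2)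
  have hterm : (fun k : ℕ => ellipticGCoeff a lam k * (r ^ 2) ^ (k + 1)) = fun k =>
      1 / (2 * lam * (sin (π * a) / π)) * (kaTail a (k + 1 + 1) * (r ^ 2) ^ (k + 1)) +
        -1 / 2 * ((r ^ 2) ^ (k + 1) / ((k : ℝ) + 1)) := by
    ext k
    rw [ellipticGCoeff]
    field_simp
    ring
  rw [hterm, ellipticG_eq_of_hasSum ha0 ha1 hlam hr hΓ, show ∀ L G T l : ℝ,
      1 / 2 - ramanujanR a / 2 + l / 2 + G / L - (1 / 2 - ramanujanR a / 2 + T / L) =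
        1 / L * (G - T) + -1 / 2 * -l by intros; ring]
  exact hΓ'.add hlog

lemma ellipticGCoeff_neg (ha0 : 0 < a) (ha1 : a < 1) (hge : a * (1 - a) ≤ lam) (k : ℕ) :
    ellipticGCoeff a lam k < 0 := by
  have hq : 0 < a * (1 - a) := mul_pos ha0 (by linarith)
  have hL : 0 < sin (π * a) / π := div_pos (sin_pi_mul_pos ha0 ha1) pi_pos
  have hlam : 0 < lam := hq.trans_le hge
  have htail := kaTail_succ_le ha0 ha1 (k + 1)
  push_cast at htail
  rw [ellipticGCoeff, sub_neg, div_lt_div_iff₀ (by positivity) (by positivity)]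
  calc kaTail a (k + 2) * (2 * ((k : ℝ) + 1))
      ≤ a * (1 - a) * (sin (π * a) / π) / ((k : ℝ) + 1 + 1) * (2 * ((k : ℝ) + 1)) := by
        gcongr
    _ < a * (1 - a) * (sin (π * a) / π) / ((k : ℝ) + 1) * (2 * ((k : ℝ) + 1)) := by
        gcongr
        linarith
    _ ≤ 1 * (2 * lam * (sin (π * a) / π)) := by
        rw [div_mul_eq_mul_div, div_le_iff₀ (by positivity)]
        have : 0 ≤ 2 * (sin (π * a) / π) * ((k : ℝ) + 1) := by positivity
        nlinarith [mul_le_mul_of_nonneg_right hge this]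

end Expansion

lemma strictAntiOn_of_hasSum_mul_pow_succ {s : Set ℝ} {f g : ℝ → ℝ} {c : ℕ → ℝ} {C : ℝ}
    (hg : StrictMonoOn g s) (hg0 : ∀ x ∈ s, 0 ≤ g x) (hc : ∀ k, c k ≤ 0) (hc0 : c 0 < 0)
    (hf : ∀ x ∈ s, HasSum (fun k => c k * g x ^ (k + 1)) (f x - C)) : StrictAntiOn f s := by
  intro x hx y hy hxy
  have hgxy := hg hx hy hxy
  have := hasSum_lt (i := 0)
    (f := fun k => c k * g y ^ (k + 1)) (g := fun k => c k * g x ^ (k + 1))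
    (fun k => mul_le_mul_of_nonpos_left (pow_le_pow_left₀ (hg0 x hx) hgxy.le _) (hc k))
    (mul_lt_mul_of_neg_left (pow_lt_pow_left₀ hgxy (hg0 x hx) one_ne_zero) hc0)
    (hf y hy) (hf x hx)
  linarith

theorem stmt14 (a : ℝ) (ha : a ∈ Set.Ioc (0 : ℝ) (1/2)) (lam : ℝ) (hlam : 0 < lam)
    (hge : a * (1 - a) ≤ lam) :
    StrictAntiOn (fun r : ℝ =>
      1/2 - Real.log (Real.exp (ramanujanR a / 2) / Real.sqrt (1 - r^2))
        + (r^2 * Real.sin (Real.pi * a)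
            - 2 * (1 - a) * (Ea a r - (Real.sqrt (1 - r^2))^2 * Ka a r))
          / (2 * lam * r^2 * (Real.sqrt (1 - r^2))^2 * Real.sin (Real.pi * a)))
      (Set.Ioo 0 1) := by
  obtain ⟨ha0, ha_half⟩ := ha
  have ha1 : a < 1 := by linarith
  exact strictAntiOn_of_hasSum_mul_pow_succ (g := fun r => r ^ 2)
    ((pow_left_strictMonoOn₀ two_ne_zero).mono fun r hr => hr.1.le) (fun r _ => sq_nonneg r)
    (fun k => (ellipticGCoeff_neg ha0 ha1 hge k).le) (ellipticGCoeff_neg ha0 ha1 hge 0)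
    (fun r hr => hasSum_ellipticG ha0 ha1 hlam.ne' hr)
end

section
/- For every x ∈ (0, 1/2], one has g₁(x) > 0, where g₁(x) = Σ_{k=0}^∞ ((2^{2k+4} − 2)/2^{2k+3})·(2k+1)(2k+2)·ζ(2k+4)·x^{2k} − Σ_{k=0}^∞ 2·(2k+2)(2k+3)·ζ(2k+5)·x^{2k+1}, with ζ the Riemann zeta function (both series converge for |x| < 1). -/
open Real Set Filter Topology

/-! Expand `ζ(s) = ∑ₙ (n+1)^{-s}` and exchange the order of summation (all terms are
nonnegative). Since `∑ₖ (2k+1)(2k+2) t^{2k}` and `∑ₖ (2k+2)(2k+3) t^{2k+1}` are the even and odd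
parts of `∑ₘ (m+1)(m+2) tᵐ = 2/(1-t)³`, and the first coefficient is `2 - 4^{-k}/4`, the `n`-th
term of the difference becomes `(n+1)^{-4} (4/(1+t)³ - E(t/2)/4)` with `t = x/(n+1) ∈ (0, 1/2]`
and `E(u) = (1-u)^{-3} + (1+u)^{-3}`. This is positive because `4/(1+t)³ ≥ 32/27` while
`E(t/2)/4 ≤ (64/27 + 1)/4`. -/

section EvenOddParts

variable {𝕜 : Type*} [Field 𝕜] [CharZero 𝕜] [TopologicalSpace 𝕜] [IsTopologicalRing 𝕜]
  {f : ℕ → 𝕜} {a b : 𝕜}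

theorem HasSum.even_of_neg_one_pow (ha : HasSum f a) (hb : HasSum (fun m => (-1) ^ m * f m) b) :
    HasSum (fun k => f (2 * k)) ((a + b) / 2) := by
  have hinj : Function.Injective (fun k : ℕ => 2 * k) := mul_right_injective₀ two_ne_zero
  have hvan : ∀ m ∉ Set.range (fun k : ℕ => 2 * k), (f m + (-1) ^ m * f m) / 2 = 0 := by
    intro m hm
    have hodd : Odd m := Nat.not_even_iff_odd.1 fun ⟨r, hr⟩ => hm ⟨r, by simp only; omega⟩
    simp [hodd.neg_one_pow]
  convert (hinj.hasSum_iff hvan).2 ((ha.add hb).div_const 2) using 2 with k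
  simp [pow_mul]

theorem HasSum.odd_of_neg_one_pow (ha : HasSum f a) (hb : HasSum (fun m => (-1) ^ m * f m) b) :
    HasSum (fun k => f (2 * k + 1)) ((a - b) / 2) := by
  have hinj : Function.Injective (fun k : ℕ => 2 * k + 1) := fun i j h => by simp only at h; omega
  have hvan : ∀ m ∉ Set.range (fun k : ℕ => 2 * k + 1), (f m - (-1) ^ m * f m) / 2 = 0 := by
    intro m hm
    have heven : Even m := Nat.not_odd_iff_even.1 fun ⟨r, hr⟩ => hm ⟨r, hr.symm⟩
    simp [heven.neg_one_pow]
  convert (hinj.hasSum_iff hvan).2 ((ha.sub hb).div_const 2) using 2 with k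
  simp [pow_succ, pow_mul]

end EvenOddParts

theorem hasSum_succ_mul_succ_succ_mul_geometric {r : ℝ} (hr : |r| < 1) :
    HasSum (fun m : ℕ => ((m : ℝ) + 1) * ((m : ℝ) + 2) * r ^ m) (2 / (1 - r) ^ 3) := by
  have h := (hasSum_choose_mul_geometric_of_norm_lt_one (𝕜 := ℝ) 2
    (by rwa [Real.norm_eq_abs])).mul_left 2
  rw [show (2 : ℝ) * (1 / (1 - r) ^ (2 + 1)) = 2 / (1 - r) ^ 3 by ring] at h
  refine h.congr_fun fun m => ?_
  rw [Nat.cast_choose_two]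
  push_cast
  ring

noncomputable def evenSeriesSum (t : ℝ) : ℝ := 1 / (1 - t) ^ 3 + 1 / (1 + t) ^ 3

noncomputable def oddSeriesSum (t : ℝ) : ℝ := 1 / (1 - t) ^ 3 - 1 / (1 + t) ^ 3

theorem hasSum_evenSeriesSum {t : ℝ} (ht : |t| < 1) :
    HasSum (fun k : ℕ => (2 * (k : ℝ) + 1) * (2 * (k : ℝ) + 2) * t ^ (2 * k))
      (evenSeriesSum t) := by
  have hneg := hasSum_succ_mul_succ_succ_mul_geometric (r := -t) (by rwa [abs_neg])
  have h := (hasSum_succ_mul_succ_succ_mul_geometric ht).even_of_neg_one_pow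
    (hneg.congr_fun fun m => by rw [neg_pow]; ring)
  rw [show (2 / (1 - t) ^ 3 + 2 / (1 - -t) ^ 3) / 2 = evenSeriesSum t by
    rw [evenSeriesSum]; ring] at h
  exact h.congr_fun fun k => by push_cast; ring

theorem hasSum_oddSeriesSum {t : ℝ} (ht : |t| < 1) :
    HasSum (fun k : ℕ => (2 * (k : ℝ) + 2) * (2 * (k : ℝ) + 3) * t ^ (2 * k + 1))
      (oddSeriesSum t) := by
  have hneg := hasSum_succ_mul_succ_succ_mul_geometric (r := -t) (by rwa [abs_neg])
  have h := (hasSum_succ_mul_succ_succ_mul_geometric ht).odd_of_neg_one_pow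
    (hneg.congr_fun fun m => by rw [neg_pow]; ring)
  rw [show (2 / (1 - t) ^ 3 - 2 / (1 - -t) ^ 3) / 2 = oddSeriesSum t by
    rw [oddSeriesSum]; ring] at h
  exact h.congr_fun fun k => by push_cast; ring

theorem hasSum_zetaR_natCast {m : ℕ} (hm : 2 ≤ m) :
    HasSum (fun n : ℕ => 1 / ((n : ℝ) + 1) ^ m) (zetaR m) := by
  have hs : Summable (fun n : ℕ => 1 / ((n : ℝ) + 1) ^ m) := by
    have := (summable_nat_add_iff 1).2 (summable_one_div_nat_pow.2 (by omega : 1 < m))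
    exact this.congr fun n => by push_cast; rfl
  simpa only [zetaR, Real.rpow_natCast] using hs.hasSum

theorem zetaR_natCast_le {m m' : ℕ} (hm : 2 ≤ m) (hmm' : m ≤ m') : zetaR m' ≤ zetaR m :=
  hasSum_le (fun n => one_div_le_one_div_of_le (by positivity)
      (pow_le_pow_right₀ (by simp) hmm'))
    (hasSum_zetaR_natCast (hm.trans hmm')) (hasSum_zetaR_natCast hm)

theorem hasSum_tsum_mul_zetaR {c : ℕ → ℝ} (hc : ∀ k, 0 ≤ c k) {e : ℕ → ℕ} (he : ∀ k, 2 ≤ e k)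
    {F : ℕ → ℝ} (hF : ∀ n : ℕ, HasSum (fun k => c k / ((n : ℝ) + 1) ^ e k) (F n)) :
    HasSum F (∑' k, c k * zetaR (e k)) := by
  set f : ℕ × ℕ → ℝ := fun p => c p.1 / ((p.2 : ℝ) + 1) ^ e p.1
  have hrow (k : ℕ) : HasSum (fun n => f (k, n)) (c k * zetaR (e k)) := by
    simpa only [mul_one_div] using (hasSum_zetaR_natCast (he k)).mul_left (c k)
  have hcs : Summable c := by simpa using (hF 0).summable
  have hsum : Summable (fun k => c k * zetaR (e k)) :=
    .of_nonneg_of_le (fun k => mul_nonneg (hc k) ((hasSum_zetaR_natCast (he k)).nonneg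
        fun n => by positivity))
      (fun k => mul_le_mul_of_nonneg_left (zetaR_natCast_le le_rfl (he k)) (hc k))
      (hcs.mul_right _)
  have hf : Summable f := (summable_prod_of_nonneg fun p => div_nonneg (hc p.1) (by positivity)).2
    ⟨fun k => (hrow k).summable, hsum.congr fun k => ((hrow k).tsum_eq).symm⟩
  rw [(hf.hasSum.prod_fiberwise hrow).tsum_eq]
  exact ((Equiv.prodComm ℕ ℕ).hasSum_iff.2 hf.hasSum).prod_fiberwise hF

theorem hasSum_evenZetaSeries_inner {x N : ℝ} (hN : N ≠ 0) (ht : |x / N| < 1) :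
    HasSum (fun k : ℕ => ((2 : ℝ) ^ (2 * k + 4) - 2) / 2 ^ (2 * k + 3) * (2 * (k : ℝ) + 1) *
        (2 * (k : ℝ) + 2) * x ^ (2 * k) / N ^ (2 * k + 4))
      ((2 * evenSeriesSum (x / N) - evenSeriesSum (x / N / 2) / 4) / N ^ 4) := by
  have ht2 : |x / N / 2| < 1 := by rw [abs_div, abs_two]; linarith [abs_nonneg (x / N)]
  refine ((((hasSum_evenSeriesSum ht).mul_left 2).sub
    ((hasSum_evenSeriesSum ht2).div_const 4)).div_const (N ^ 4)).congr_fun fun k => ?_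
  rw [div_pow, div_pow, div_pow]
  field_simp
  ring

theorem hasSum_oddZetaSeries_inner {x N : ℝ} (hN : N ≠ 0) (ht : |x / N| < 1) :
    HasSum (fun k : ℕ => 2 * (2 * (k : ℝ) + 2) * (2 * (k : ℝ) + 3) * x ^ (2 * k + 1) /
        N ^ (2 * k + 5))
      (2 * oddSeriesSum (x / N) / N ^ 4) := by
  refine (((hasSum_oddSeriesSum ht).mul_left 2).div_const (N ^ 4)).congr_fun fun k => ?_
  rw [div_pow]
  field_simp
  ring

theorem two_mul_oddSeriesSum_lt {t : ℝ} (h0 : 0 ≤ t) (h1 : t ≤ 1 / 2) :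
    2 * oddSeriesSum t < 2 * evenSeriesSum t - evenSeriesSum (t / 2) / 4 := by
  have e1 : 8 / 27 ≤ 1 / (1 + t) ^ 3 := by
    rw [le_div_iff₀ (by positivity)]
    nlinarith [pow_le_pow_left₀ (by linarith : 0 ≤ 1 + t) (by linarith : 1 + t ≤ 3 / 2) 3]
  have e2 : 1 / (1 - t / 2) ^ 3 ≤ 64 / 27 := by
    have h := pow_le_pow_left₀ (by norm_num : (0 : ℝ) ≤ 3 / 4) (by linarith : 3 / 4 ≤ 1 - t / 2) 3
    rw [div_le_iff₀ (by positivity)]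
    nlinarith
  have e3 : 1 / (1 + t / 2) ^ 3 ≤ 1 := by
    rw [div_le_one (by positivity)]
    exact one_le_pow₀ (by linarith)
  rw [evenSeriesSum, evenSeriesSum, oddSeriesSum]
  linarith

theorem abs_div_natCast_succ_lt_one {x : ℝ} (hx : |x| < 1) (n : ℕ) : |x / ((n : ℝ) + 1)| < 1 := by
  rw [abs_div, abs_of_pos (by positivity : (0 : ℝ) < n + 1)]
  exact (div_le_self (abs_nonneg x) (by simp)).trans_lt hx

theorem hasSum_evenZetaSeries {x : ℝ} (hx : |x| < 1) :
    HasSum (fun n : ℕ => (2 * evenSeriesSum (x / ((n : ℝ) + 1))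
        - evenSeriesSum (x / ((n : ℝ) + 1) / 2) / 4) / ((n : ℝ) + 1) ^ 4)
      (∑' k : ℕ, ((2 : ℝ) ^ (2 * k + 4) - 2) / 2 ^ (2 * k + 3) * (2 * (k : ℝ) + 1) *
        (2 * (k : ℝ) + 2) * zetaR (2 * (k : ℝ) + 4) * x ^ (2 * k)) := by
  have hcoeff (k : ℕ) : 0 ≤ ((2 : ℝ) ^ (2 * k + 4) - 2) / 2 ^ (2 * k + 3) := by
    have : (2 : ℝ) ≤ 2 ^ (2 * k + 4) := le_self_pow₀ one_le_two (by omega)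
    exact div_nonneg (by linarith) (by positivity)
  convert hasSum_tsum_mul_zetaR (e := fun k => 2 * k + 4)
    (c := fun k => ((2 : ℝ) ^ (2 * k + 4) - 2) / 2 ^ (2 * k + 3) * (2 * (k : ℝ) + 1) *
      (2 * (k : ℝ) + 2) * x ^ (2 * k))
    (fun k => mul_nonneg (mul_nonneg (mul_nonneg (hcoeff k) (by positivity)) (by positivity))
      ((even_two_mul k).pow_nonneg x)) (fun k => by omega)
    (fun n => hasSum_evenZetaSeries_inner (by positivity) (abs_div_natCast_succ_lt_one hx n)) using 1
  exact tsum_congr fun k => by push_cast; ring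

theorem hasSum_oddZetaSeries {x : ℝ} (hx0 : 0 ≤ x) (hx1 : x < 1) :
    HasSum (fun n : ℕ => 2 * oddSeriesSum (x / ((n : ℝ) + 1)) / ((n : ℝ) + 1) ^ 4)
      (∑' k : ℕ, 2 * (2 * (k : ℝ) + 2) * (2 * (k : ℝ) + 3) * zetaR (2 * (k : ℝ) + 5) *
        x ^ (2 * k + 1)) := by
  convert hasSum_tsum_mul_zetaR (e := fun k => 2 * k + 5)
    (c := fun k => 2 * (2 * (k : ℝ) + 2) * (2 * (k : ℝ) + 3) * x ^ (2 * k + 1))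
    (fun k => by positivity) (fun k => by omega)
    (fun n => hasSum_oddZetaSeries_inner (by positivity)
      (abs_div_natCast_succ_lt_one (by rwa [abs_of_nonneg hx0]) n)) using 1
  exact tsum_congr fun k => by push_cast; ring

theorem stmt18 (x : ℝ) (hx : x ∈ Set.Ioc (0 : ℝ) (1/2)) :
    0 < (∑' k : ℕ, ((2 : ℝ)^(2*k+4) - 2) / 2^(2*k+3) * (2*(k : ℝ)+1) * (2*(k : ℝ)+2) *
          zetaR (2*(k : ℝ)+4) * x^(2*k))
        - ∑' k : ℕ, 2 * (2*(k : ℝ)+2) * (2*(k : ℝ)+3) * zetaR (2*(k : ℝ)+5) * x^(2*k+1) := by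
  obtain ⟨hx0, hx1⟩ := hx
  have hlt (n : ℕ) : 2 * oddSeriesSum (x / ((n : ℝ) + 1)) / ((n : ℝ) + 1) ^ 4 <
      (2 * evenSeriesSum (x / ((n : ℝ) + 1)) - evenSeriesSum (x / ((n : ℝ) + 1) / 2) / 4) /
        ((n : ℝ) + 1) ^ 4 := by
    refine div_lt_div_of_pos_right (two_mul_oddSeriesSum_lt (by positivity) ?_) (by positivity)
    exact (div_le_self hx0.le (by simp)).trans hx1
  exact sub_pos.2 (hasSum_lt (fun n => (hlt n).le) (hlt 0) (hasSum_oddZetaSeries hx0.le (by linarith))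
    (hasSum_evenZetaSeries (by rw [abs_of_pos hx0]; linarith)))
end
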